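/- Games as validly complete pairs: Let P ⊆ List M be nonempty and prefix-closed and ≃ an identification of positions on P. (1) Every position s ∈ P belongs to some valid t-skeleton on P; hence the set vts(P) of all valid t-skeletons on P is consistent, has union equal to P, and the pair (vts(P), ≃) is validly complete. (2) If 𝒮 is a consistent set of t-skeletons and ≈ is an identification of positions on ⋃𝒮 such that the pair (𝒮, ≈) is validly complete — i.e. every member of 𝒮 is a valid t-skeleton on ⋃𝒮 (with respect to ≈), and every valid t-skeleton on ⋃𝒮 belongs to 𝒮 — then the valid t-skeletons on the union ⋃𝒮 are precisely the elements of 𝒮. -/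

import Mathlib

/-!
Games as validly complete pairs (Corollary 3.21 of "Game semantics of
Martin-Löf type theory").  Positions are finite lists over a type `M` of moves.
-/

namespace GameSemantics

variable {M : Type*}

/-- A set of positions is prefix-closed: every prefix of a member belongs to it. -/
def PrefClosed (X : Set (List M)) : Prop :=
  ∀ ⦃s t : List M⦄, s <+: t → t ∈ X → s ∈ X

/-- (Tree): nonempty and prefix-closed. -/
def Tree (S : Set (List M)) : Prop :=
  S.Nonempty ∧ ∀ (s : List M) (m : M), s ++ [m] ∈ S → s ∈ S

/-- (Edet): determinacy on even-length positions. -/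
def Edet (S : Set (List M)) : Prop :=
  ∀ (s : List M) (m n n' : M), s ++ [m, n] ∈ S → s ++ [m, n'] ∈ S →
    Even (s ++ [m, n]).length → n = n'

/-- (Oinc) relative to `P`: inclusiveness on odd-length positions of `P`. -/
def Oinc (S P : Set (List M)) : Prop :=
  ∀ (s : List M) (m : M), s ++ [m] ∈ P → Odd (s ++ [m]).length → s ∈ S → s ++ [m] ∈ S

/-- A t-skeleton on `P`. -/
def TSkelOn (P S : Set (List M)) : Prop :=
  S ⊆ P ∧ Tree S ∧ Edet S ∧ Oinc S P

/-- Consistency `σ ≍ τ` of two t-skeletons. -/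
def ConsistentPair (σ τ : Set (List M)) : Prop :=
  ∀ (s : List M) (m : M), s ++ [m] ∈ σ ∪ τ → Odd (s ++ [m]).length →
    s ∈ σ ∩ τ → s ++ [m] ∈ σ ∩ τ

/-- A consistent set of t-skeletons. -/
def ConsistentSet (𝒮 : Set (Set (List M))) : Prop :=
  𝒮.Nonempty ∧ (∀ S ∈ 𝒮, Tree S ∧ Edet S) ∧
    ∀ σ ∈ 𝒮, ∀ τ ∈ 𝒮, ConsistentPair σ τ

/-- An identification of positions on `P`: an equivalence relation on `P`
satisfying the axioms I1, I2 and I3. -/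
structure IsIdent (P : Set (List M)) (R : List M → List M → Prop) : Prop where
  mem_left : ∀ ⦃s t : List M⦄, R s t → s ∈ P
  mem_right : ∀ ⦃s t : List M⦄, R s t → t ∈ P
  refl : ∀ s ∈ P, R s s
  symm : ∀ ⦃s t : List M⦄, R s t → R t s
  trans : ∀ ⦃s t u : List M⦄, R s t → R t u → R s u
  length_eq : ∀ ⦃s t : List M⦄, R s t → s.length = t.length
  init : ∀ ⦃s t : List M⦄ ⦃m n : M⦄, R (s ++ [m]) (t ++ [n]) → R s t
  extend : ∀ ⦃s t : List M⦄ (m : M), R s t → s ++ [m] ∈ P →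
    ∃ n : M, t ++ [n] ∈ P ∧ R (s ++ [m]) (t ++ [n])

/-- `S ≲ T` for t-skeletons on `(P, R)`. -/
def TLe (P : Set (List M)) (R : List M → List M → Prop)
    (S T : Set (List M)) : Prop :=
  ∀ (s : List M) (m n : M), s ++ [m, n] ∈ S → Even (s ++ [m, n]).length →
    ∀ (t : List M) (l : M), t ++ [l] ∈ T → Odd (t ++ [l]).length →
      R (s ++ [m]) (t ++ [l]) →
      ∃ r : M, t ++ [l, r] ∈ T ∧ R (s ++ [m, n]) (t ++ [l, r])

/-- `S ≃ T` for t-skeletons on `(P, R)`. -/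
def TEquiv (P : Set (List M)) (R : List M → List M → Prop)
    (S T : Set (List M)) : Prop :=
  TLe P R S T ∧ TLe P R T S

/-- Validity of a t-skeleton on `(P, R)`. -/
def TValid (P : Set (List M)) (R : List M → List M → Prop)
    (S : Set (List M)) : Prop :=
  TEquiv P R S S

/-- The set of all valid t-skeletons on `(P, R)`. -/
def vts (P : Set (List M)) (R : List M → List M → Prop) : Set (Set (List M)) :=
  {S : Set (List M) | TSkelOn P S ∧ TValid P R S}

/-- A set `𝒮` of t-skeletons is validly complete w.r.t. `R`: every member is a
valid t-skeleton on the union `⋃₀ 𝒮`, and every valid t-skeleton on the union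
belongs to `𝒮`. -/
def ValidlyComplete (R : List M → List M → Prop) (𝒮 : Set (Set (List M))) : Prop :=
  (∀ σ ∈ 𝒮, TSkelOn (⋃₀ 𝒮) σ ∧ TValid (⋃₀ 𝒮) R σ) ∧
    ∀ A : Set (List M), TSkelOn (⋃₀ 𝒮) A → TValid (⋃₀ 𝒮) R A → A ∈ 𝒮

/-!
Fix `s ∈ P`. Let Opponent move freely, and let Player answer an odd-length `q` by some `r`
with `q ++ [r] ≃ s.take (q.length + 1)`, choosing the next move of `s` while `q` is a prefix
of `s`; by I3 such an answer exists whenever `q ≃ s.take q.length`. The resulting t-skeleton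
contains `s` and is valid: if `u ++ [m, n]` is played and `u ++ [m] ≃ t ++ [l]`, then by I2
`t ++ [l] ≃ s.take (t ++ [l]).length`, so `t ++ [l]` is answered too, by a move identified
with `n` through `s`. Hence `vts P R` covers `P`; any two t-skeletons on `P` are consistent
by (Oinc), and part (2) is a reformulation of valid completeness.
-/

lemma IsIdent.init_take {P : Set (List M)} {R : List M → List M → Prop} (hI : IsIdent P R)
    {s q : List M} {a : M} (h : R (s.take (q.length + 1)) (q ++ [a])) :
    q.length < s.length ∧ R (s.take q.length) q := by
  have hlt : q.length < s.length := by
    have := hI.length_eq h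
    simp only [List.length_take, List.length_append, List.length_singleton] at this
    omega
  rw [← List.take_concat_get' s _ hlt] at h
  exact ⟨hlt, hI.init h⟩

inductive Reach (P : Set (List M)) (f : List M → Option M) : List M → Prop
  | nil : Reach P f []
  | opp {t : List M} {m : M} : Reach P f t → t ++ [m] ∈ P → Odd (t ++ [m]).length →
      Reach P f (t ++ [m])
  | ply {q : List M} {r : M} : Reach P f q → Odd q.length → f q = some r → q ++ [r] ∈ P →
      Reach P f (q ++ [r])

namespace Reach

variable {P : Set (List M)} {f : List M → Option M}

lemma snoc_inv {u q : List M} {r : M} (h : Reach P f u) (hu : u = q ++ [r]) :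
    Reach P f q ∧ (Odd u.length ∨ f q = some r) := by
  cases h with
  | nil => exact absurd hu.symm (List.append_ne_nil_of_right_ne_nil q (List.cons_ne_nil r []))
  | opp ht _ hodd =>
      obtain ⟨rfl, rfl⟩ := List.append_singleton_inj.mp hu
      exact ⟨ht, Or.inl hodd⟩
  | ply hq _ hf _ =>
      obtain ⟨rfl, rfl⟩ := List.append_singleton_inj.mp hu
      exact ⟨hq, Or.inr hf⟩

lemma of_snoc {q : List M} {r : M} (h : Reach P f (q ++ [r])) : Reach P f q :=
  (h.snoc_inv rfl).1

lemma eq_some_of_even {q : List M} {r : M} (h : Reach P f (q ++ [r]))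
    (heven : Even (q ++ [r]).length) : f q = some r :=
  (h.snoc_inv rfl).2.resolve_left (Nat.not_odd_iff_even.mpr heven)

lemma mem {t : List M} (h0 : [] ∈ P) (h : Reach P f t) : t ∈ P := by
  cases h with
  | nil => exact h0
  | opp _ hm _ => exact hm
  | ply _ _ _ hr => exact hr

lemma tSkelOn (h0 : [] ∈ P) : TSkelOn P {t | Reach P f t} := by
  refine ⟨fun t ht => ht.mem h0, ⟨⟨[], nil⟩, fun t m ht => of_snoc ht⟩, ?_,
    fun t m hm hodd ht => opp ht hm hodd⟩
  intro t m n n' hn hn' heven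
  rw [List.append_cons] at hn hn' heven
  have h1 := eq_some_of_even hn heven
  have h2 := eq_some_of_even hn' (by simpa using heven)
  exact Option.some_injective _ (h1.symm.trans h2)

end Reach

/-- The last clause keeps the play on `s` itself, so that `s` is reached. -/
def IsAnswer (P : Set (List M)) (R : List M → List M → Prop) (s q : List M) (r : M) : Prop :=
  q ++ [r] ∈ P ∧ R (s.take (q.length + 1)) (q ++ [r]) ∧ (q <+: s → q ++ [r] <+: s)

open Classical in
noncomputable def follow (P : Set (List M)) (R : List M → List M → Prop) (s q : List M) :
    Option M :=
  if h : ∃ r, IsAnswer P R s q r then some h.choose else none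

section Follow

variable {P : Set (List M)} {R : List M → List M → Prop} {s : List M}

lemma isAnswer_of_follow_eq_some {q : List M} {r : M} (h : follow P R s q = some r) :
    IsAnswer P R s q r := by
  unfold follow at h
  split_ifs at h with hex
  exact Option.some_injective _ h ▸ hex.choose_spec

lemma exists_isAnswer (hP : PrefClosed P) (hI : IsIdent P R) (hs : s ∈ P) {q : List M}
    (hlt : q.length < s.length) (hq : R (s.take q.length) q) : ∃ r, IsAnswer P R s q r := by
  have hsucc : s.take q.length ++ [s[q.length]] = s.take (q.length + 1) :=
    List.take_concat_get' s _ hlt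
  have hsP : s.take (q.length + 1) ∈ P := hP (List.take_prefix _ s) hs
  by_cases hpre : q <+: s
  · have hq' : q ++ [s[q.length]] = s.take (q.length + 1) :=
      (congrArg (· ++ [s[q.length]]) (List.prefix_iff_eq_take.mp hpre)).trans hsucc
    refine ⟨s[q.length], ?_, ?_, fun _ => ?_⟩ <;> rw [hq']
    · exact hsP
    · exact hI.refl _ hsP
    · exact List.take_prefix _ s
  · obtain ⟨r, hrP, hr⟩ := hI.extend _ hq (hsucc ▸ hsP)
    exact ⟨r, hrP, hsucc ▸ hr, fun h => absurd h hpre⟩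

lemma exists_follow_eq_some (hP : PrefClosed P) (hI : IsIdent P R) (hs : s ∈ P) {q : List M}
    (hlt : q.length < s.length) (hq : R (s.take q.length) q) : ∃ r, follow P R s q = some r :=
  ⟨_, dif_pos (exists_isAnswer hP hI hs hlt hq)⟩

lemma reach_follow_of_prefix (hP : PrefClosed P) (hI : IsIdent P R) (hs : s ∈ P) :
    ∀ {t : List M}, t <+: s → Reach P (follow P R s) t := by
  intro t
  induction t using List.reverseRecOn with
  | nil => exact fun _ => Reach.nil
  | append_singleton t a ih =>
    intro hta
    have ht : t <+: s := (List.prefix_append t [a]).trans hta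
    have htaP : t ++ [a] ∈ P := hP hta hs
    rcases Nat.even_or_odd t.length with heven | hodd
    · exact Reach.opp (ih ht) htaP (by simpa using heven.add_one)
    have hlt : t.length < s.length := by simpa using hta.length_le
    have hts : R (s.take t.length) t := by
      rw [← List.prefix_iff_eq_take.mp ht]
      exact hI.refl _ (hP ht hs)
    obtain ⟨r, hr⟩ := exists_follow_eq_some hP hI hs hlt hts
    have htr : t ++ [r] <+: s := (isAnswer_of_follow_eq_some hr).2.2 ht
    have hra : r = a := (List.append_singleton_inj.mp
      ((List.prefix_of_prefix_length_le htr hta (by simp)).eq_of_length (by simp))).2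
    exact Reach.ply (ih ht) hodd (hra ▸ hr) htaP

lemma tValid_reach_follow (hP : PrefClosed P) (hI : IsIdent P R) (hs : s ∈ P) :
    TValid P R {t | Reach P (follow P R s) t} := by
  suffices TLe P R {t | Reach P (follow P R s) t} {t | Reach P (follow P R s) t} from
    ⟨this, this⟩
  intro u m n hu heven t l ht hodd hR
  rw [List.append_cons] at hu heven ⊢
  have hn := Reach.eq_some_of_even hu heven
  have hun : R (s.take ((u ++ [m]).length + 1)) (u ++ [m] ++ [n]) :=
    (isAnswer_of_follow_eq_some hn).2.1
  obtain ⟨hlt, hsu⟩ := hI.init_take hun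
  have hlen : (u ++ [m]).length = (t ++ [l]).length := hI.length_eq hR
  rw [hlen] at hlt hsu hun
  obtain ⟨r, hr⟩ := exists_follow_eq_some hP hI hs hlt (hI.trans hsu hR)
  obtain ⟨hrP, htr, -⟩ := isAnswer_of_follow_eq_some hr
  refine ⟨r, ?_, ?_⟩ <;> rw [List.append_cons t l [r]]
  · exact Reach.ply ht hodd hr hrP
  · exact hI.trans (hI.symm hun) htr

end Follow

section Vts

variable {P : Set (List M)} {R : List M → List M → Prop}

lemma exists_mem_vts (hP : PrefClosed P) (hI : IsIdent P R) {s : List M} (hs : s ∈ P) :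
    ∃ S ∈ vts P R, s ∈ S :=
  ⟨_, ⟨Reach.tSkelOn (hP List.nil_prefix hs), tValid_reach_follow hP hI hs⟩,
    reach_follow_of_prefix hP hI hs (List.prefix_refl s)⟩

lemma TSkelOn.consistentPair {σ τ : Set (List M)} (hσ : TSkelOn P σ) (hτ : TSkelOn P τ) :
    ConsistentPair σ τ := by
  intro s m hm hodd hs
  have hmP : s ++ [m] ∈ P := hm.elim (fun h => hσ.1 h) (fun h => hτ.1 h)
  exact ⟨hσ.2.2.2 s m hmP hodd hs.1, hτ.2.2.2 s m hmP hodd hs.2⟩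

lemma consistentSet_vts (hne : P.Nonempty) (hP : PrefClosed P) (hI : IsIdent P R) :
    ConsistentSet (vts P R) := by
  obtain ⟨s, hs⟩ := hne
  obtain ⟨S, hS, -⟩ := exists_mem_vts hP hI hs
  exact ⟨⟨S, hS⟩, fun S hS => ⟨hS.1.2.1, hS.1.2.2.1⟩,
    fun σ hσ τ hτ => hσ.1.consistentPair hτ.1⟩

lemma sUnion_vts (hP : PrefClosed P) (hI : IsIdent P R) : ⋃₀ vts P R = P :=
  Set.Subset.antisymm (Set.sUnion_subset fun _ hS => hS.1.1)
    fun _ hs => Set.mem_sUnion.mpr (exists_mem_vts hP hI hs)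

end Vts

lemma validlyComplete_iff {R : List M → List M → Prop} {𝒮 : Set (Set (List M))} :
    ValidlyComplete R 𝒮 ↔ vts (⋃₀ 𝒮) R = 𝒮 :=
  ⟨fun h => Set.Subset.antisymm (fun A hA => h.2 A hA.1 hA.2) h.1,
    fun h => ⟨fun _ hσ => h.ge hσ, fun _ h₁ h₂ => h.le ⟨h₁, h₂⟩⟩⟩

/-- **Games as validly complete pairs**: (1) every position of `P` belongs to some
valid t-skeleton on `P`; hence the set `vts P R` of all valid t-skeletons on `P` is
consistent, has union `P`, and the pair `(vts P R, R)` is validly complete.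
(2) Conversely, if `𝒮` is a consistent set of t-skeletons and `R` an identification
of positions on `⋃₀ 𝒮` such that `(𝒮, R)` is validly complete, then the valid
t-skeletons on the union are precisely the elements of `𝒮`. -/
theorem games_as_validly_complete_pairs :
    (∀ (P : Set (List M)) (R : List M → List M → Prop),
      P.Nonempty → PrefClosed P → IsIdent P R →
      (∀ s ∈ P, ∃ S ∈ vts P R, s ∈ S) ∧
        ConsistentSet (vts P R) ∧ ⋃₀ vts P R = P ∧
        ValidlyComplete R (vts P R)) ∧
    (∀ (𝒮 : Set (Set (List M))) (R : List M → List M → Prop),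
      ConsistentSet 𝒮 → IsIdent (⋃₀ 𝒮) R → ValidlyComplete R 𝒮 →
      {A : Set (List M) | TSkelOn (⋃₀ 𝒮) A ∧ TValid (⋃₀ 𝒮) R A} = 𝒮) := by
  refine ⟨fun P R hne hP hI => ?_, fun 𝒮 R _ _ h => validlyComplete_iff.mp h⟩
  have hunion := sUnion_vts hP hI
  refine ⟨fun s hs => exists_mem_vts hP hI hs, consistentSet_vts hne hP hI, hunion, ?_⟩
  rw [validlyComplete_iff, hunion]

end GameSemantics
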